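/- For every null form Q there is a constant C such that for all C¹ scalar functions u,v on ℝ₊×ℝ³ and all points with x≠0: |Q(∂u,∂v)| ≤ C(|∂u||∂̄v| + |∂̄u||∂v|), where |∂u|=Σ_{α=0}^3|∂_αu| and |∂̄u|=Σ_{α=0}^3|∂̄_αu|. -/

import Mathlib

noncomputable section

open Real MeasureTheory

/-- Spatial points x ∈ ℝ³. -/
abbrev Spc := Fin 3 → ℝ

/-- Spacetime points (t, x) ∈ ℝ × ℝ³. -/
abbrev Pt := ℝ × Spc

/-- Euclidean radius r = |x|. -/
def rad (x : Spc) : ℝ := Real.sqrt (∑ i, x i ^ 2)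

/-- Partial derivative in time, ∂_t. -/
def ptd (u : Pt → ℝ) (p : Pt) : ℝ := deriv (fun s => u (s, p.2)) p.1

/-- Partial derivative in the i-th spatial direction, ∂_i. -/
def pxd (i : Fin 3) (u : Pt → ℝ) (p : Pt) : ℝ :=
  deriv (fun s => u (p.1, Function.update p.2 i s)) (p.2 i)

/-- Radial derivative ∂_r = ω^i ∂_i, with ω_i = x_i / r. -/
def prd (u : Pt → ℝ) (p : Pt) : ℝ := ∑ i, (p.2 i / rad p.2) * pxd i u p

/-- d'Alembertian □ = -∂_t² + Δ. -/
def box (u : Pt → ℝ) (p : Pt) : ℝ := - ptd (ptd u) p + ∑ i, pxd i (pxd i u) p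

/-- Spacetime gradient ∂u = (∂_t u, ∂_1 u, ∂_2 u, ∂_3 u). -/
def sgrad (u : Pt → ℝ) (p : Pt) : Fin 4 → ℝ :=
  ![ptd u p, pxd 0 u p, pxd 1 u p, pxd 2 u p]

/-- Good spatial derivative ∂̄_i = ∂_i - ω_i ∂_r. -/
def gb (i : Fin 3) (u : Pt → ℝ) (p : Pt) : ℝ :=
  pxd i u p - (p.2 i / rad p.2) * prd u p

/-- Good derivatives (∂̄_0, ∂̄_1, ∂̄_2, ∂̄_3), ∂̄_0 = (∂_t+∂_r)/2. -/
def gdrv (u : Pt → ℝ) (p : Pt) : Fin 4 → ℝ :=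
  ![(ptd u p + prd u p) / 2, gb 0 u p, gb 1 u p, gb 2 u p]

/-- |∂u| = Σ_α |∂_α u|. -/
def gradAbs (u : Pt → ℝ) (p : Pt) : ℝ := ∑ α, |sgrad u p α|

/-- |∂̄u| = Σ_α |∂̄_α u|. -/
def gdrvAbs (u : Pt → ℝ) (p : Pt) : ℝ := ∑ α, |gdrv u p α|

/-- Basic null form Q₀(X,Y) = -X₀Y₀ + δ^{ij}X_iY_j. -/
def Q0form (X Y : Fin 4 → ℝ) : ℝ := -(X 0 * Y 0) + X 1 * Y 1 + X 2 * Y 2 + X 3 * Y 3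

/-- Basic null forms Q_{αβ}(X,Y) = X_αY_β - X_βY_α. -/
def Qform (a b : Fin 4) (X Y : Fin 4 → ℝ) : ℝ := X a * Y b - X b * Y a

/-- A null form is a linear combination of Q₀ and the Q_{αβ}. -/
def IsNullForm (Q : (Fin 4 → ℝ) → (Fin 4 → ℝ) → ℝ) : Prop :=
  ∃ (c : ℝ) (d : Fin 4 → Fin 4 → ℝ), ∀ X Y,
    Q X Y = c * Q0form X Y + ∑ a, ∑ b, d a b * Qform a b X Y

/-- First-order operators acting on scalar functions on spacetime. -/
abbrev Op := (Pt → ℝ) → Pt → ℝ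

/-- Scaling vector field S = t∂_t + r∂_r. -/
def vfS : Op := fun u p => p.1 * ptd u p + ∑ i, p.2 i * pxd i u p

/-- Rotations Ω_{ij} = x_i∂_j - x_j∂_i. -/
def vfRot (i j : Fin 3) : Op := fun u p => p.2 i * pxd j u p - p.2 j * pxd i u p

/-- Lorentz boosts Ω_{0i} = -t∂_i - x_i∂_t. -/
def vfBoost (i : Fin 3) : Op := fun u p => -(p.1 * pxd i u p) - p.2 i * ptd u p

/-- The 11 Minkowski vector fields. -/
def mink : Fin 11 → Op :=
  ![ptd, pxd 0, pxd 1, pxd 2, vfS, vfBoost 0, vfBoost 1, vfBoost 2,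
    vfRot 0 1, vfRot 0 2, vfRot 1 2]

/-- Application of a product Z^I of first-order operators, I given as a list. -/
def applyOps (L : List Op) (u : Pt → ℝ) : Pt → ℝ := L.foldr (fun Z v => Z v) u

/-- A multi-index: a word in the Minkowski vector fields. -/
def IsMulti (L : List Op) : Prop := ∀ Z ∈ L, ∃ n : Fin 11, Z = mink n

/-- A word in the spatial rotations only. -/
def IsRotMulti (L : List Op) : Prop :=
  ∀ Z ∈ L, Z = vfRot 0 1 ∨ Z = vfRot 0 2 ∨ Z = vfRot 1 2

/-- The region A^R = {1/R ≤ r - t ≤ R}. -/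
def regA (R : ℝ) : Set Pt := {p | 1 / R ≤ rad p.2 - p.1 ∧ rad p.2 - p.1 ≤ R}

/-- The region B^R = {r - t ≤ R}. -/
def regB (R : ℝ) : Set Pt := {p | rad p.2 - p.1 ≤ R}

/-- The region A₀^R = A^R ∩ {t = 0}. -/
def regA0 (R : ℝ) : Set Spc := {x | 1 / R ≤ rad x ∧ rad x ≤ R}

/-- L² norm of a function on a spatial slice. -/
def L2 (f : Spc → ℝ) : ℝ := (∫ x : Spc, (f x) ^ 2) ^ (1/2 : ℝ)

/-- Weighted Sobolev norm ‖u‖_{H^m_δ} = Σ_{k≤m} ‖⟨x⟩^{δ+k} ∇^k u‖_{L²}. -/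
def sobNorm (m : ℕ) (δ : ℝ) (u : Spc → ℝ) : ℝ :=
  ∑ k ∈ Finset.range (m + 1),
    (∫ x : Spc, ((1 + ∑ i, x i ^ 2) ^ ((δ + k) / 2) * ‖iteratedFDeriv ℝ k u x‖) ^ 2) ^ (1/2 : ℝ)

/-- Membership in the weighted Sobolev space H^m_δ (finiteness of the norm). -/
def MemSob (m : ℕ) (δ : ℝ) (u : Spc → ℝ) : Prop :=
  ∀ k ≤ m, Integrable (fun x : Spc =>
    ((1 + ∑ i, x i ^ 2) ^ ((δ + k) / 2) * ‖iteratedFDeriv ℝ k u x‖) ^ 2)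

/-- ‖f‖_{C^M} ≤ ε, stated derivative by derivative. -/
def CMBound (M : ℕ) (f : Spc → ℝ) (ε : ℝ) : Prop :=
  ∀ k ≤ M, ∀ x, ‖iteratedFDeriv ℝ k f x‖ ≤ ε

/-- The transport operator 𝓛 = ∂_t + ∂_r + 1/r. -/
def opLb : Op := fun u p => ptd u p + prd u p + u p / rad p.2

/-- The spacetime gradient of u = t - r, namely (1, -ω₁, -ω₂, -ω₃). -/
def duTmR (p : Pt) : Fin 4 → ℝ :=
  ![1, -(p.2 0 / rad p.2), -(p.2 1 / rad p.2), -(p.2 2 / rad p.2)]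

/-- Oscillating profiles T_λ^{(k,i)}. -/
def Ttrig (lam : ℝ) (k i : ℤ) (p : Pt) : ℝ :=
  if (k + i) % 2 = 0 then Real.cos (i * (p.1 - rad p.2) / lam)
  else Real.sin (i * (p.1 - rad p.2) / lam)

/-!
Put `ω = x/r` and `L = (-1, ω)`. Every `X ∈ ℝ⁴` splits as `X = G + ρ L` with `ρ = ω · (X₁, X₂, X₃)`,
and for `X = ∂u` the remainder `G = (2∂̄₀u, ∂̄₁u, ∂̄₂u, ∂̄₃u)` consists of good derivatives.
Since `|ω| = 1`, `L` is null, so `Q(L, L) = 0` for every null form, and bilinearity gives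
`Q(X, Y) = Q(X, G_Y) + ρ_Y Q(G_X, L)`: each term carries a good derivative of `u` or of `v`.
-/

theorem LinearMap.BilinForm.apply_eq_sum_single {ι R : Type*} [Fintype ι] [DecidableEq ι]
    [CommSemiring R] (B : LinearMap.BilinForm R (ι → R)) (X Y : ι → R) :
    B X Y = ∑ i, ∑ j, X i * Y j * B (Pi.single i 1) (Pi.single j 1) := by
  conv_lhs => rw [← Matrix.toLinearMap₂'_toMatrix' (R := R) B]
  simp only [Matrix.toLinearMap₂'_apply, LinearMap.toMatrix₂'_apply, smul_eq_mul, mul_assoc]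

theorem abs_apply_le_of_norm_le {ι : Type*} [Fintype ι] {f : ι → ℝ} {r : ℝ} (h : ‖f‖ ≤ r)
    (i : ι) : |f i| ≤ r :=
  (norm_le_pi_norm f i).trans h

def sumAbs {ι : Type*} [Fintype ι] (X : ι → ℝ) : ℝ := ∑ i, |X i|

theorem sumAbs_nonneg {ι : Type*} [Fintype ι] (X : ι → ℝ) : 0 ≤ sumAbs X :=
  Finset.sum_nonneg fun i _ => abs_nonneg (X i)

theorem LinearMap.BilinForm.abs_apply_le_sumAbs_mul_sumAbs {ι : Type*} [Fintype ι] [DecidableEq ι]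
    (B : LinearMap.BilinForm ℝ (ι → ℝ)) (X Y : ι → ℝ) :
    |B X Y| ≤ (∑ i, ∑ j, |B (Pi.single i 1) (Pi.single j 1)|) * sumAbs X * sumAbs Y := by
  set K := ∑ i, ∑ j, |B (Pi.single i 1) (Pi.single j 1)|
  have hK : ∀ i j, |B (Pi.single i 1) (Pi.single j 1)| ≤ K := fun i j =>
    (Finset.single_le_sum (f := fun j => |B (Pi.single i 1) (Pi.single j 1)|)
      (fun _ _ => abs_nonneg _) (Finset.mem_univ j)).trans
    (Finset.single_le_sum (f := fun i => ∑ j, |B (Pi.single i 1) (Pi.single j 1)|)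
      (fun _ _ => Finset.sum_nonneg fun _ _ => abs_nonneg _) (Finset.mem_univ i))
  rw [B.apply_eq_sum_single]
  calc |∑ i, ∑ j, X i * Y j * B (Pi.single i 1) (Pi.single j 1)|
      ≤ ∑ i, ∑ j, |X i| * |Y j| * K := by
        refine (Finset.abs_sum_le_sum_abs _ _).trans (Finset.sum_le_sum fun i _ => ?_)
        refine (Finset.abs_sum_le_sum_abs _ _).trans (Finset.sum_le_sum fun j _ => ?_)
        rw [abs_mul, abs_mul]
        exact mul_le_mul_of_nonneg_left (hK i j) (by positivity)
    _ = K * sumAbs X * sumAbs Y := by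
        rw [sumAbs, sumAbs, mul_assoc, Finset.sum_mul_sum, Finset.mul_sum]
        simp only [Finset.mul_sum]
        exact Finset.sum_congr rfl fun i _ => Finset.sum_congr rfl fun j _ => by ring

theorem LinearMap.BilinForm.apply_eq_of_apply_self_eq_zero {R M : Type*} [CommRing R]
    [AddCommGroup M] [Module R M] (B : LinearMap.BilinForm R M) {L : M} (hL : B L L = 0)
    (X Y : M) (a b : R) : B X Y = B X (Y - b • L) + b * B (X - a • L) L := by
  simp only [map_sub, map_smul, LinearMap.sub_apply, LinearMap.smul_apply, smul_eq_mul, hL]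
  ring

section NullFrame

variable {n : ℕ} (ω : Fin n → ℝ)

def radialComp (X : Fin (n + 1) → ℝ) : ℝ := ∑ i, ω i * X i.succ

def goodComp (X : Fin (n + 1) → ℝ) : Fin (n + 1) → ℝ :=
  Fin.cons ((X 0 + radialComp ω X) / 2) fun i => X i.succ - ω i * radialComp ω X

def nullVec : Fin (n + 1) → ℝ := Fin.cons (-1) ω

variable {ω}

theorem sumAbs_sub_radialComp_smul_le (X : Fin (n + 1) → ℝ) :
    sumAbs (X - radialComp ω X • nullVec ω) ≤ 2 * sumAbs (goodComp ω X) := by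
  simp only [sumAbs, Fin.sum_univ_succ, goodComp, nullVec, Pi.sub_apply, Pi.smul_apply,
    Fin.cons_zero, Fin.cons_succ, smul_eq_mul]
  have hsum : 0 ≤ ∑ i : Fin n, |X i.succ - ω i * radialComp ω X| :=
    Finset.sum_nonneg fun i _ => abs_nonneg _
  rw [show X 0 - radialComp ω X * -1 = 2 * ((X 0 + radialComp ω X) / 2) by ring, abs_mul,
    abs_two]
  simp_rw [mul_comm (radialComp ω X)]
  linarith

theorem abs_radialComp_le (hω : ‖ω‖ ≤ 1) (X : Fin (n + 1) → ℝ) :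
    |radialComp ω X| ≤ sumAbs X := by
  rw [sumAbs, Fin.sum_univ_succ]
  calc |radialComp ω X| ≤ ∑ i, |ω i * X i.succ| := Finset.abs_sum_le_sum_abs _ _
    _ ≤ ∑ i : Fin n, |X i.succ| := Finset.sum_le_sum fun i _ => by
        rw [abs_mul]
        exact mul_le_of_le_one_left (abs_nonneg _) (abs_apply_le_of_norm_le hω i)
    _ ≤ |X 0| + ∑ i : Fin n, |X i.succ| := le_add_of_nonneg_left (abs_nonneg _)

theorem sumAbs_nullVec_le (hω : ‖ω‖ ≤ 1) : sumAbs (nullVec ω) ≤ n + 1 := by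
  simp only [sumAbs, nullVec, Fin.sum_univ_succ, Fin.cons_zero, Fin.cons_succ, abs_neg, abs_one]
  have : ∑ i, |ω i| ≤ n := by
    simpa using Finset.sum_le_sum fun i (_ : i ∈ Finset.univ) => abs_apply_le_of_norm_le hω i
  linarith

theorem LinearMap.BilinForm.abs_apply_le_of_apply_nullVec_self
    (B : LinearMap.BilinForm ℝ (Fin (n + 1) → ℝ)) (hω : ‖ω‖ ≤ 1)
    (hB : B (nullVec ω) (nullVec ω) = 0) {K : ℝ} (hK0 : 0 ≤ K)
    (hK : ∀ X Y, |B X Y| ≤ K * sumAbs X * sumAbs Y) (X Y : Fin (n + 1) → ℝ) :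
    |B X Y| ≤ 2 * (n + 1) * K *
      (sumAbs X * sumAbs (goodComp ω Y) + sumAbs (goodComp ω X) * sumAbs Y) := by
  have hX := sumAbs_nonneg X
  have hY := sumAbs_nonneg Y
  have hXb := sumAbs_nonneg (goodComp ω X)
  have hYb := sumAbs_nonneg (goodComp ω Y)
  set GX := X - radialComp ω X • nullVec ω
  set GY := Y - radialComp ω Y • nullVec ω
  have hGX : K * sumAbs GX ≤ K * (2 * sumAbs (goodComp ω X)) :=
    mul_le_mul_of_nonneg_left (sumAbs_sub_radialComp_smul_le X) hK0
  have hGY : K * sumAbs GY ≤ K * (2 * sumAbs (goodComp ω Y)) :=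
    mul_le_mul_of_nonneg_left (sumAbs_sub_radialComp_smul_le Y) hK0
  have hL := sumAbs_nullVec_le hω
  rw [B.apply_eq_of_apply_self_eq_zero hB X Y (radialComp ω X) (radialComp ω Y)]
  calc |B X GY + radialComp ω Y * B GX (nullVec ω)|
      ≤ |B X GY| + |radialComp ω Y| * |B GX (nullVec ω)| := by
        rw [← abs_mul]; exact abs_add_le _ _
    _ ≤ K * sumAbs X * sumAbs GY + sumAbs Y * (K * sumAbs GX * sumAbs (nullVec ω)) :=
        add_le_add (hK X GY)
          (mul_le_mul (abs_radialComp_le hω Y) (hK GX _) (abs_nonneg _) hY)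
    _ ≤ 2 * (n + 1) * K *
        (sumAbs X * sumAbs (goodComp ω Y) + sumAbs (goodComp ω X) * sumAbs Y) := by
        have h1 : K * sumAbs GX * sumAbs (nullVec ω) ≤ K * (2 * sumAbs (goodComp ω X)) * (n + 1) :=
          mul_le_mul hGX hL (sumAbs_nonneg _) (by positivity)
        have h2 : 0 ≤ K * sumAbs X * sumAbs (goodComp ω Y) := by positivity
        have hn : (0 : ℝ) ≤ n := n.cast_nonneg
        nlinarith [mul_le_mul_of_nonneg_left hGY hX, mul_le_mul_of_nonneg_left h1 hY,
          mul_nonneg hn h2]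

end NullFrame

theorem IsNullForm.exists_bilinForm {Q : (Fin 4 → ℝ) → (Fin 4 → ℝ) → ℝ} (hQ : IsNullForm Q) :
    ∃ B : LinearMap.BilinForm ℝ (Fin 4 → ℝ), ∀ X Y, Q X Y = B X Y := by
  obtain ⟨c, d, hQ⟩ := hQ
  refine ⟨LinearMap.mk₂ ℝ Q ?_ ?_ ?_ ?_, fun _ _ => rfl⟩ <;> intros <;>
    simp only [hQ, Q0form, Qform, Fin.sum_univ_four, Pi.add_apply, Pi.smul_apply, smul_eq_mul] <;>
    ring

theorem IsNullForm.apply_nullVec_self {Q : (Fin 4 → ℝ) → (Fin 4 → ℝ) → ℝ} (hQ : IsNullForm Q)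
    {ω : Fin 3 → ℝ} (hω : ∑ i, ω i ^ 2 = 1) : Q (nullVec ω) (nullVec ω) = 0 := by
  obtain ⟨c, d, hQ⟩ := hQ
  have hvec : nullVec ω = ![-1, ω 0, ω 1, ω 2] := by
    ext i; fin_cases i <;> rfl
  have hQ0 : Q0form (nullVec ω) (nullVec ω) = 0 := by
    rw [Fin.sum_univ_three] at hω
    simp [Q0form, hvec]
    linear_combination hω
  simp [hQ, hQ0, Qform, mul_comm]

def radialDir (x : Spc) : Spc := fun i => x i / rad x

theorem rad_nonneg (x : Spc) : 0 ≤ rad x := Real.sqrt_nonneg _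

theorem abs_le_rad (x : Spc) (i : Fin 3) : |x i| ≤ rad x :=
  Real.abs_le_sqrt (Finset.single_le_sum (f := fun j => x j ^ 2) (fun j _ => sq_nonneg (x j))
    (Finset.mem_univ i))

theorem norm_radialDir_le_one (x : Spc) : ‖radialDir x‖ ≤ 1 :=
  (pi_norm_le_iff_of_nonneg zero_le_one).2 fun i => by
    rw [Real.norm_eq_abs, radialDir, abs_div, abs_of_nonneg (rad_nonneg x)]
    exact div_le_one_of_le₀ (abs_le_rad x i) (rad_nonneg x)

theorem sum_radialDir_sq {x : Spc} (hx : x ≠ 0) : ∑ i, radialDir x i ^ 2 = 1 := by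
  have hr : rad x ≠ 0 := fun hr => hx <| funext fun i => abs_nonpos_iff.1 (hr ▸ abs_le_rad x i)
  have hr2 : rad x ^ 2 = ∑ i, x i ^ 2 := Real.sq_sqrt (Finset.sum_nonneg fun i _ => sq_nonneg _)
  simp only [radialDir, div_pow, ← Finset.sum_div, ← hr2]
  exact div_self (pow_ne_zero 2 hr)

theorem gdrv_eq_goodComp (u : Pt → ℝ) (p : Pt) :
    gdrv u p = goodComp (radialDir p.2) (sgrad u p) := by
  ext i
  fin_cases i <;>
    simp [gdrv, goodComp, radialComp, sgrad, prd, gb, radialDir, Fin.sum_univ_three] <;> rfl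

theorem gradAbs_eq_sumAbs (u : Pt → ℝ) (p : Pt) : gradAbs u p = sumAbs (sgrad u p) := rfl

theorem gdrvAbs_eq_sumAbs_goodComp (u : Pt → ℝ) (p : Pt) :
    gdrvAbs u p = sumAbs (goodComp (radialDir p.2) (sgrad u p)) := by
  rw [gdrvAbs, gdrv_eq_goodComp, sumAbs]

/-- null form estimate |Q(∂u,∂v)| ≲ |∂u||∂̄v| + |∂̄u||∂v|. -/
theorem null_form_estimate (Q : (Fin 4 → ℝ) → (Fin 4 → ℝ) → ℝ) (hQ : IsNullForm Q) :
    ∃ C > 0, ∀ u v : Pt → ℝ, ContDiff ℝ 1 u → ContDiff ℝ 1 v →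
      ∀ p : Pt, 0 ≤ p.1 → p.2 ≠ 0 →
        |Q (sgrad u p) (sgrad v p)| ≤
          C * (gradAbs u p * gdrvAbs v p + gdrvAbs u p * gradAbs v p) := by
  obtain ⟨B, hB⟩ := hQ.exists_bilinForm
  set K := ∑ i, ∑ j, |B (Pi.single i 1) (Pi.single j 1)|
  have hK : ∀ X Y, |B X Y| ≤ (K + 1) * sumAbs X * sumAbs Y := fun X Y =>
    (B.abs_apply_le_sumAbs_mul_sumAbs X Y).trans <|
      mul_le_mul_of_nonneg_right (mul_le_mul_of_nonneg_right (le_add_of_nonneg_right zero_le_one)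
        (sumAbs_nonneg X)) (sumAbs_nonneg Y)
  refine ⟨8 * (K + 1), by positivity, fun u v _ _ p _ hx => ?_⟩
  have hnull : B (nullVec (radialDir p.2)) (nullVec (radialDir p.2)) = 0 :=
    hB _ _ ▸ hQ.apply_nullVec_self (sum_radialDir_sq hx)
  simp only [hB, gradAbs_eq_sumAbs, gdrvAbs_eq_sumAbs_goodComp]
  refine (B.abs_apply_le_of_apply_nullVec_self (norm_radialDir_le_one p.2) hnull (by positivity)
    hK _ _).trans_eq ?_
  push_cast
  ring
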